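/- For every integer k ≥ 1 and every real α ≥ 1, the univariate Jackson-type kernel J_k(x) := c_k sinc^{2k}(x/(2kπα)), where c_k := (∫_ℝ sinc^{2k}(u/(2kπα)) du)^{−1}, satisfies ∑_{j ∈ ℤ} J_k(y − j) = 1 for every y ∈ ℝ. -/

import Mathlib

open MeasureTheory Filter

open Real in
/-- The cardinal sine function `sinc x = sin (π x) / (π x)`, with `sinc 0 = 1`. -/
noncomputable def sinc (x : ℝ) : ℝ :=
  if x = 0 then 1 else Real.sin (π * x) / (π * x)

open Real in
/-- The univariate Fejér kernel. -/
noncomputable def fejer (x : ℝ) : ℝ := (1 / 2) * _root_.sinc (x / 2) ^ 2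

open Real in
/-- The univariate Jackson-type kernel of order `k` with parameter `α`. -/
noncomputable def jackson (k : ℕ) (α : ℝ) (x : ℝ) : ℝ :=
  (∫ u : ℝ, _root_.sinc (u / (2 * k * π * α)) ^ (2 * k))⁻¹ * _root_.sinc (x / (2 * k * π * α)) ^ (2 * k)

/-! Poisson summation: `∑ⱼ G (y - j) = ∑ₘ 𝓕 G m · e^{2πimy}` for `G x = sinc (x / c) ^ n`.
Up to the factor `cⁿ`, `G` is the Fourier transform of the `n`-fold convolution power of the
indicator of `[-1/(2c), 1/(2c)]`, so by Fourier inversion `𝓕 G` vanishes outside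
`[-n/(2c), n/(2c)]`. For the Jackson kernel `n = 2k` and `c = 2kπα`, hence `n/(2c) < 1/2`: only
the term `m = 0` survives, and it is `𝓕 G 0 = ∫ G`, the inverse of the normalization constant. -/

open scoped Real FourierTransform Convolution

lemma sinc_eq_real_sinc (x : ℝ) : sinc x = Real.sinc (π * x) := by
  by_cases hx : x = 0
  · simp [sinc, hx]
  · simp [sinc, Real.sinc, hx, Real.pi_ne_zero]

@[fun_prop]
lemma continuous_sinc : Continuous sinc := by
  simp_rw [funext sinc_eq_real_sinc]
  fun_prop

lemma abs_sinc_le_one (x : ℝ) : |sinc x| ≤ 1 := by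
  rw [sinc_eq_real_sinc]
  exact Real.abs_sinc_le_one _

lemma abs_sinc_le_inv_abs {x : ℝ} (hx : x ≠ 0) : |sinc x| ≤ |π * x|⁻¹ := by
  rw [sinc, if_neg hx, abs_div, div_eq_mul_inv]
  exact mul_le_of_le_one_left (by positivity) (Real.abs_sin_le_one _)

lemma sinc_sq_le_two_mul_inv_one_add_sq (x : ℝ) : sinc x ^ 2 ≤ 2 * (1 + (π * x) ^ 2)⁻¹ := by
  rw [← sq_abs]
  rcases le_or_gt ((π * x) ^ 2) 1 with h | h
  · calc |sinc x| ^ 2 ≤ 1 := pow_le_one₀ (abs_nonneg _) (abs_sinc_le_one x)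
      _ ≤ 2 * (1 + (π * x) ^ 2)⁻¹ := by
        rw [← div_eq_mul_inv, le_div_iff₀ (by positivity)]; linarith
  · have hx : x ≠ 0 := by rintro rfl; norm_num at h
    calc |sinc x| ^ 2 ≤ (|π * x|⁻¹) ^ 2 :=
          pow_le_pow_left₀ (abs_nonneg _) (abs_sinc_le_inv_abs hx) 2
      _ = ((π * x) ^ 2)⁻¹ := by rw [inv_pow, sq_abs]
      _ ≤ 2 * (1 + (π * x) ^ 2)⁻¹ := by
        rw [← div_eq_mul_inv, inv_eq_one_div, div_le_div_iff₀ (by positivity) (by positivity)]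
        linarith

lemma abs_pow_le_sq_of_abs_le_one {s : ℝ} (hs : |s| ≤ 1) {n : ℕ} (hn : 2 ≤ n) :
    |s ^ n| ≤ s ^ 2 := by
  rw [abs_pow, ← sq_abs s]
  exact pow_le_pow_of_le_one (abs_nonneg s) hs hn

lemma integrable_sinc_pow {n : ℕ} (hn : 2 ≤ n) : Integrable (fun x => sinc x ^ n) := by
  refine ((integrable_inv_one_add_sq.comp_mul_left' Real.pi_ne_zero).const_mul 2).mono'
    (by fun_prop : Continuous fun x => sinc x ^ n).aestronglyMeasurable (.of_forall fun x => ?_)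
  exact (abs_pow_le_sq_of_abs_le_one (abs_sinc_le_one x) hn).trans
    (sinc_sq_le_two_mul_inv_one_add_sq x)

lemma isBigO_sinc_div_pow {n : ℕ} (hn : 2 ≤ n) {c : ℝ} (hc : c ≠ 0) :
    (fun x => sinc (x / c) ^ n) =O[cocompact ℝ] (|·| ^ (-2 : ℝ)) := by
  refine Asymptotics.IsBigO.of_bound ((c / π) ^ 2) ?_
  filter_upwards [cocompact_le_cofinite (eventually_cofinite_ne 0)] with x hx
  have hxc : x / c ≠ 0 := div_ne_zero hx hc
  rw [Real.norm_eq_abs, Real.norm_eq_abs, Real.rpow_neg (abs_nonneg x), Real.rpow_two,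
    abs_of_nonneg (a := (|x| ^ 2)⁻¹) (by positivity)]
  calc |sinc (x / c) ^ n| ≤ |sinc (x / c)| ^ 2 := by
        rw [sq_abs]; exact abs_pow_le_sq_of_abs_le_one (abs_sinc_le_one _) hn
    _ ≤ (|π * (x / c)|⁻¹) ^ 2 := pow_le_pow_left₀ (abs_nonneg _) (abs_sinc_le_inv_abs hxc) 2
    _ = (c / π) ^ 2 * (|x| ^ 2)⁻¹ := by
        rw [inv_pow, sq_abs, sq_abs]; field_simp

noncomputable def rect (a : ℝ) : ℝ → ℂ := (Set.Icc (-a) a).indicator 1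

lemma support_rect_subset (a : ℝ) : Function.support (rect a) ⊆ Metric.closedBall 0 a := by
  rw [Real.closedBall_eq_Icc, zero_sub, zero_add]
  exact Set.support_indicator_subset

lemma integrable_rect (a : ℝ) : Integrable (rect a) :=
  (integrable_indicator_iff measurableSet_Icc).2 (integrableOn_const measure_Icc_lt_top.ne)

lemma fourier_rect {a : ℝ} (ha : 0 < a) (w : ℝ) :
    𝓕 (rect a) w = ((2 * a * sinc (2 * a * w) : ℝ) : ℂ) := by
  have hint : 𝓕 (rect a) w = ∫ v in -a..a, Complex.exp ((-2 * π * w * Complex.I) * v) := by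
    rw [Real.fourier_real_eq_integral_exp_smul, intervalIntegral.integral_of_le (by linarith),
      ← integral_Icc_eq_integral_Ioc, ← integral_indicator measurableSet_Icc]
    congr 1 with v
    simp only [rect, Set.indicator_apply]
    split_ifs
    · simp only [Pi.one_apply, smul_eq_mul, mul_one]
      push_cast
      ring_nf
    · exact smul_zero _
  rw [hint]
  rcases eq_or_ne w 0 with rfl | hw
  · simp [sinc]
    ring
  · have hz : (-2 * π * w * Complex.I : ℂ) ≠ 0 := by simp [hw, Real.pi_ne_zero]
    rw [integral_exp_mul_complex hz, sinc, if_neg (by positivity)]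
    push_cast
    rw [Complex.sin]
    have : (w : ℂ) ≠ 0 := Complex.ofReal_ne_zero.2 hw
    have : (a : ℂ) ≠ 0 := Complex.ofReal_ne_zero.2 ha.ne'
    have : (π : ℂ) ≠ 0 := Complex.ofReal_ne_zero.2 Real.pi_ne_zero
    field_simp
    ring_nf
    rw [Complex.I_sq]
    ring

section FourierOnInnerProductSpace

variable {E : Type*} [NormedAddCommGroup E] [InnerProductSpace ℝ E] [FiniteDimensional ℝ E]
  [MeasurableSpace E] [BorelSpace E]

/-- `convPow f m` is the `(m + 1)`-fold convolution `f ⋆ ⋯ ⋆ f`. -/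
noncomputable def convPow (f : E → ℂ) : ℕ → E → ℂ
  | 0 => f
  | m + 1 => convPow f m ⋆[ContinuousLinearMap.mul ℂ ℂ] f

variable {f : E → ℂ}

lemma MeasureTheory.Integrable.convPow (hf : Integrable f) : ∀ m, Integrable (convPow f m)
  | 0 => hf
  | m + 1 => (hf.convPow m).integrable_convolution _ hf

lemma fourier_convPow (hf : Integrable f) (w : E) : ∀ m, 𝓕 (convPow f m) w = 𝓕 f w ^ (m + 1)
  | 0 => (pow_one _).symm
  | m + 1 => by
    rw [convPow, Real.fourier_mul_convolution_eq (hf.convPow m) hf, fourier_convPow hf w m,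
      pow_succ _ (m + 1)]

lemma support_convPow_subset {a : ℝ} (ha : 0 ≤ a)
    (hf : Function.support f ⊆ Metric.closedBall 0 a) :
    ∀ m : ℕ, Function.support (convPow f m) ⊆ Metric.closedBall 0 ((m + 1) * a)
  | 0 => by simpa only [convPow, Nat.cast_zero, zero_add, one_mul] using hf
  | m + 1 => by
    refine (support_convolution_subset _).trans ?_
    refine (Set.add_subset_add (support_convPow_subset ha hf m) hf).trans ?_
    rw [closedBall_add_closedBall (by positivity) ha, add_zero]
    push_cast
    ring_nf
    rfl

lemma fourier_fourier_eq_zero_of_neg_notMem_tsupport {g : E → ℂ} (hg : Integrable g)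
    (hFg : Integrable (𝓕 g)) {w : E} (hw : -w ∉ tsupport g) : 𝓕 (𝓕 g) w = 0 := by
  have hcont : ContinuousAt g (-w) := (notMem_tsupport_iff_eventuallyEq.1 hw).continuousAt
  rw [← neg_neg w, ← Real.fourierInv_eq_fourier_neg, hg.fourierInv_fourier_eq hFg hcont,
    image_eq_zero_of_notMem_tsupport hw]

lemma fourier_const_smul {F : Type*} [NormedAddCommGroup F] [NormedSpace ℂ F] (r : ℂ)
    (g : E → F) : 𝓕 (r • g) = r • 𝓕 g :=
  VectorFourier.fourierIntegral_const_smul _ _ _ _ _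

end FourierOnInnerProductSpace

lemma fourier_sinc_div_pow_eq_zero {n : ℕ} (hn : 2 ≤ n) {c : ℝ} (hc : 0 < c) {w : ℝ}
    (hw : n < 2 * c * |w|) : 𝓕 (fun x => ((sinc (x / c) ^ n : ℝ) : ℂ)) w = 0 := by
  set H := convPow (rect (2 * c)⁻¹) (n - 1)
  have hsinc : (fun x => ((sinc (x / c) ^ n : ℝ) : ℂ)) = (c : ℂ) ^ n • 𝓕 H := by
    ext x
    have : (c : ℂ) ≠ 0 := Complex.ofReal_ne_zero.2 hc.ne'
    rw [Pi.smul_apply, fourier_convPow (integrable_rect _) x, fourier_rect (by positivity),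
      Nat.sub_add_cancel (by omega), smul_eq_mul, ← mul_pow]
    push_cast
    field_simp
  have hFH : Integrable (𝓕 H) := by
    have hc' : (c : ℂ) ^ n ≠ 0 := pow_ne_zero _ (Complex.ofReal_ne_zero.2 hc.ne')
    rw [← inv_smul_smul₀ hc' (𝓕 H), ← hsinc]
    exact ((integrable_sinc_pow hn).comp_div hc.ne').ofReal.smul _
  have hw' : -w ∉ tsupport H := by
    intro hmem
    have hsupp := support_convPow_subset (by positivity) (support_rect_subset (2 * c)⁻¹) (n - 1)
    have := Metric.isClosed_closedBall.closure_subset_iff.2 hsupp hmem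
    rw [mem_closedBall_zero_iff, norm_neg, Real.norm_eq_abs, Nat.cast_sub (by omega)] at this
    rw [Nat.cast_one, sub_add_cancel, ← div_eq_mul_inv, le_div_iff₀ (by positivity)] at this
    linarith
  rw [hsinc, fourier_const_smul, Pi.smul_apply,
    fourier_fourier_eq_zero_of_neg_notMem_tsupport ((integrable_rect _).convPow _) hFH hw',
    smul_zero]

theorem tsum_add_int_eq_integral_of_fourier_eq_zero {f : ℝ → ℂ} (hf : Continuous f) {b : ℝ}
    (hb : 1 < b) (hdecay : f =O[cocompact ℝ] (|·| ^ (-b))) (hFf : ∀ n : ℤ, n ≠ 0 → 𝓕 f n = 0)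
    (x : ℝ) : ∑' n : ℤ, f (x + n) = ∫ t, f t := by
  have hsum : Summable fun n : ℤ => 𝓕 f n :=
    summable_of_ne_finset_zero (s := {0}) fun n hn => hFf n (by simpa using hn)
  rw [Real.tsum_eq_tsum_fourier_of_rpow_decay_of_summable hf hb hdecay hsum x,
    tsum_eq_single 0 fun n hn => by rw [hFf n hn, zero_mul]]
  simp [Real.fourier_eq]

theorem tsum_sinc_div_pow_sub_int {n : ℕ} (hn : 2 ≤ n) {c : ℝ} (hc : n < 2 * c) (y : ℝ) :
    ∑' j : ℤ, sinc ((y - j) / c) ^ n = ∫ u, sinc (u / c) ^ n := by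
  have hc0 : 0 < c := by
    have : (2 : ℝ) ≤ n := by exact_mod_cast hn
    linarith
  have hvanish (j : ℤ) (hj : j ≠ 0) : 𝓕 (fun x => ((sinc (x / c) ^ n : ℝ) : ℂ)) j = 0 := by
    refine fourier_sinc_div_pow_eq_zero hn hc0 (hc.trans_le ?_)
    exact le_mul_of_one_le_right (by positivity) (by exact_mod_cast Int.one_le_abs hj)
  have hpoisson := tsum_add_int_eq_integral_of_fourier_eq_zero (by fun_prop) one_lt_two
    (Complex.isBigO_ofReal_left.2 (isBigO_sinc_div_pow hn hc0.ne')) hvanish y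
  apply Complex.ofReal_injective
  rw [Complex.ofReal_tsum, ← (Equiv.neg ℤ).tsum_eq, ← integral_complex_ofReal]
  simpa [sub_eq_add_neg] using hpoisson

lemma integral_sinc_div_pow_pos {n : ℕ} (hn : 2 ≤ n) (heven : Even n) {c : ℝ} (hc : c ≠ 0) :
    0 < ∫ u, sinc (u / c) ^ n :=
  integral_pos_of_integrable_nonneg_nonzero (x := 0) (by fun_prop)
    ((integrable_sinc_pow hn).comp_div hc) (fun u => heven.pow_nonneg _) (by simp [sinc])

theorem stmt12 (k : ℕ) (hk : 1 ≤ k) (α : ℝ) (hα : 1 ≤ α) :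
    ∀ y : ℝ, ∑' j : ℤ, jackson k α (y - (j : ℝ)) = 1 := by
  intro y
  have hn : 2 ≤ 2 * k := by omega
  have hc : ((2 * k : ℕ) : ℝ) < 2 * (2 * k * π * α) := by
    have hk' : (1 : ℝ) ≤ k := by exact_mod_cast hk
    have hπα : 1 < π * α := by nlinarith [Real.pi_gt_three]
    push_cast
    nlinarith
  simp only [jackson]
  rw [tsum_mul_left, tsum_sinc_div_pow_sub_int hn hc y]
  exact inv_mul_cancel₀ (integral_sinc_div_pow_pos hn (even_two_mul k) (by positivity)).ne'
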